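/- Let μ ∈ ℝ, σ > 0 and ρ > 0, and let q(x) = 2 φ_{μ,σ²}(x) Φ((x - μ)/√(σ² + ρ²)). Then the second moment of the distribution with density q is ∫_{-∞}^{+∞} x² q(x) dx = μ² + 4μσ²/√(2π(2σ² + ρ²)) + σ². -/

import Mathlib

open MeasureTheory Real

/-- The density of the standard normal distribution. -/
noncomputable def stdGaussianPDF (x : ℝ) : ℝ :=
  (Real.sqrt (2 * Real.pi))⁻¹ * Real.exp (-x ^ 2 / 2)

/-- The cumulative distribution function of the standard normal distribution. -/
noncomputable def stdGaussianCDF (x : ℝ) : ℝ :=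
  ∫ t in Set.Iic x, stdGaussianPDF t

/-- The density of the normal distribution with mean `μ` and variance `σ²`. -/
noncomputable def normalPDF (μ σ : ℝ) (x : ℝ) : ℝ :=
  (σ * Real.sqrt (2 * Real.pi))⁻¹ * Real.exp (-(x - μ) ^ 2 / (2 * σ ^ 2))

/-!
Substituting `x = μ + σu` turns `q` into `σ⁻¹` times the skew-normal density `2φ(u)Φ(αu)` with
`α = σ/√(σ² + ρ²)`. Since `Φ(-t) = 1 - Φ(t)`, the even part of `2φ(u)Φ(αu)` is `φ`, so its zeroth and
second moments are those of `φ`, namely `1` and `1`. Its first moment is, after integrating by parts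
against `uφ(u) = (-φ)'(u)`, the Gaussian integral `2α ∫ φ(u)φ(αu) du = 2α/√(2π(1 + α²))`.
Expanding `(μ + σu)²` and noting `α/√(1 + α²) = σ/√(2σ² + ρ²)` gives the formula.
-/

open ProbabilityTheory

lemma stdGaussianPDF_eq_gaussianPDFReal : stdGaussianPDF = gaussianPDFReal 0 1 := by
  ext x; simp [stdGaussianPDF, gaussianPDFReal]

lemma continuous_stdGaussianPDF : Continuous stdGaussianPDF := by
  unfold stdGaussianPDF; fun_prop

lemma stdGaussianPDF_nonneg (x : ℝ) : 0 ≤ stdGaussianPDF x := by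
  unfold stdGaussianPDF; positivity

lemma stdGaussianPDF_neg (x : ℝ) : stdGaussianPDF (-x) = stdGaussianPDF x := by
  simp [stdGaussianPDF]

lemma integrable_stdGaussianPDF : Integrable stdGaussianPDF :=
  stdGaussianPDF_eq_gaussianPDFReal ▸ integrable_gaussianPDFReal 0 1

lemma integral_stdGaussianPDF : ∫ x, stdGaussianPDF x = 1 := by
  rw [stdGaussianPDF_eq_gaussianPDFReal, integral_gaussianPDFReal_eq_one 0 one_ne_zero]

lemma integrable_pow_mul_stdGaussianPDF (n : ℕ) :
    Integrable fun x => x ^ n * stdGaussianPDF x := by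
  refine ((integrable_rpow_mul_exp_neg_mul_sq (b := 1 / 2) (by norm_num)
    (s := n) (by linarith [n.cast_nonneg (α := ℝ)])).const_mul (√(2 * π))⁻¹).congr
    (.of_forall fun x => ?_)
  simp only [stdGaussianPDF, rpow_natCast]
  ring_nf

lemma hasDerivAt_stdGaussianPDF (x : ℝ) :
    HasDerivAt stdGaussianPDF (-x * stdGaussianPDF x) x := by
  have h : HasDerivAt (fun y : ℝ => -y ^ 2 / 2) (-x) x :=
    ((hasDerivAt_pow 2 x).fun_neg.div_const 2).congr_deriv (by ring)
  exact (h.exp.const_mul (√(2 * π))⁻¹).congr_deriv (by rw [stdGaussianPDF]; ring)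

lemma integral_sq_mul_stdGaussianPDF : ∫ x, x ^ 2 * stdGaussianPDF x = 1 := by
  have h := integral_mul_deriv_eq_deriv_mul_of_integrable (u := id) (u' := 1)
    (v := fun x => -stdGaussianPDF x) (v' := fun x => x * stdGaussianPDF x)
    (fun x _ => hasDerivAt_id x) (fun x _ => by simpa using (hasDerivAt_stdGaussianPDF x).fun_neg)
    (by simpa [Pi.mul_def, ← mul_assoc, ← sq] using integrable_pow_mul_stdGaussianPDF 2)
    (by simpa [Pi.mul_def] using integrable_stdGaussianPDF.neg)
    (by simpa [Pi.mul_def] using (integrable_pow_mul_stdGaussianPDF 1).neg)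
  simpa [← mul_assoc, ← sq, integral_neg, integral_stdGaussianPDF] using h

lemma stdGaussianPDF_mul_stdGaussianPDF_mul (α x : ℝ) :
    stdGaussianPDF x * stdGaussianPDF (α * x)
      = (2 * π)⁻¹ * exp (-((1 + α ^ 2) / 2) * x ^ 2) := by
  have hsq : √(2 * π) ^ 2 = 2 * π := sq_sqrt (by positivity)
  simp only [stdGaussianPDF]
  rw [mul_mul_mul_comm, ← exp_add, ← mul_inv, ← sq, hsq]
  ring_nf

lemma integrable_stdGaussianPDF_mul_stdGaussianPDF_mul (α : ℝ) :
    Integrable fun x => stdGaussianPDF x * stdGaussianPDF (α * x) := by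
  simp_rw [stdGaussianPDF_mul_stdGaussianPDF_mul]
  exact (integrable_exp_neg_mul_sq (by positivity)).const_mul _

lemma integral_stdGaussianPDF_mul_stdGaussianPDF_mul (α : ℝ) :
    ∫ x, stdGaussianPDF x * stdGaussianPDF (α * x) = (√(2 * π * (1 + α ^ 2)))⁻¹ := by
  simp_rw [stdGaussianPDF_mul_stdGaussianPDF_mul, integral_const_mul, integral_gaussian]
  rw [← sqrt_inv, ← sqrt_sq (by positivity : 0 ≤ (2 * π)⁻¹), ← sqrt_mul (by positivity)]
  congr 1
  field_simp

lemma stdGaussianCDF_eq_add_intervalIntegral (x : ℝ) :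
    stdGaussianCDF x = stdGaussianCDF 0 + ∫ t in (0 : ℝ)..x, stdGaussianPDF t := by
  rw [stdGaussianCDF, stdGaussianCDF, ← intervalIntegral.integral_Iic_sub_Iic
    integrable_stdGaussianPDF.integrableOn integrable_stdGaussianPDF.integrableOn]
  ring

lemma hasDerivAt_stdGaussianCDF (x : ℝ) :
    HasDerivAt stdGaussianCDF (stdGaussianPDF x) x := by
  rw [funext stdGaussianCDF_eq_add_intervalIntegral]
  exact (intervalIntegral.integral_hasDerivAt_right integrable_stdGaussianPDF.intervalIntegrable
    (continuous_stdGaussianPDF.stronglyMeasurableAtFilter _ _)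
    continuous_stdGaussianPDF.continuousAt).const_add _

lemma continuous_stdGaussianCDF : Continuous stdGaussianCDF :=
  continuous_iff_continuousAt.2 fun x => (hasDerivAt_stdGaussianCDF x).continuousAt

lemma stdGaussianCDF_nonneg (x : ℝ) : 0 ≤ stdGaussianCDF x :=
  setIntegral_nonneg measurableSet_Iic fun t _ => stdGaussianPDF_nonneg t

lemma stdGaussianCDF_le_one (x : ℝ) : stdGaussianCDF x ≤ 1 :=
  integral_stdGaussianPDF ▸
    setIntegral_le_integral integrable_stdGaussianPDF (.of_forall stdGaussianPDF_nonneg)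

lemma stdGaussianCDF_neg (x : ℝ) : stdGaussianCDF (-x) = 1 - stdGaussianCDF x := by
  have h_upper : ∫ t in Set.Ioi (-x), stdGaussianPDF t = stdGaussianCDF x := by
    rw [← integral_comp_neg_Iic, stdGaussianCDF]
    simp_rw [stdGaussianPDF_neg]
  have h_split := intervalIntegral.integral_Iic_add_Ioi (b := -x)
    integrable_stdGaussianPDF.integrableOn integrable_stdGaussianPDF.integrableOn
  rw [integral_stdGaussianPDF, h_upper] at h_split
  rw [stdGaussianCDF]
  linarith

lemma integrable_mul_stdGaussianCDF_mul {g : ℝ → ℝ} (hg : Integrable g) (α : ℝ) :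
    Integrable fun x => g x * stdGaussianCDF (α * x) :=
  hg.mul_bdd (continuous_stdGaussianCDF.comp (continuous_const_mul α)).aestronglyMeasurable
    (.of_forall fun x => by
      rw [norm_of_nonneg (stdGaussianCDF_nonneg _)]; exact stdGaussianCDF_le_one _)

lemma integral_mul_stdGaussianCDF_mul_of_even {g : ℝ → ℝ} (hg : Integrable g)
    (hg_even : ∀ x, g (-x) = g x) (α : ℝ) :
    ∫ x, g x * stdGaussianCDF (α * x) = (∫ x, g x) / 2 := by
  have h_reflect := integral_neg_eq_self (fun x => g x * stdGaussianCDF (α * x)) volume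
  simp only [hg_even, mul_neg, stdGaussianCDF_neg, mul_sub, mul_one] at h_reflect
  rw [integral_sub hg (integrable_mul_stdGaussianCDF_mul hg α)] at h_reflect
  linarith

noncomputable def skewNormalPDF (α x : ℝ) : ℝ :=
  2 * stdGaussianPDF x * stdGaussianCDF (α * x)

lemma pow_mul_skewNormalPDF (α x : ℝ) (n : ℕ) :
    x ^ n * skewNormalPDF α x = 2 * (x ^ n * stdGaussianPDF x * stdGaussianCDF (α * x)) := by
  rw [skewNormalPDF]; ring

lemma integrable_pow_mul_skewNormalPDF (α : ℝ) (n : ℕ) :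
    Integrable fun x => x ^ n * skewNormalPDF α x := by
  simp_rw [pow_mul_skewNormalPDF]
  exact (integrable_mul_stdGaussianCDF_mul (integrable_pow_mul_stdGaussianPDF n) α).const_mul 2

lemma integral_skewNormalPDF (α : ℝ) : ∫ x, skewNormalPDF α x = 1 := by
  simp_rw [skewNormalPDF, mul_assoc, integral_const_mul, integral_mul_stdGaussianCDF_mul_of_even
    integrable_stdGaussianPDF stdGaussianPDF_neg, integral_stdGaussianPDF]
  norm_num

lemma integral_sq_mul_skewNormalPDF (α : ℝ) : ∫ x, x ^ 2 * skewNormalPDF α x = 1 := by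
  have h_even (x : ℝ) : (-x) ^ 2 * stdGaussianPDF (-x) = x ^ 2 * stdGaussianPDF x := by
    rw [neg_sq, stdGaussianPDF_neg]
  simp_rw [pow_mul_skewNormalPDF, integral_const_mul, integral_mul_stdGaussianCDF_mul_of_even
    (integrable_pow_mul_stdGaussianPDF 2) h_even, integral_sq_mul_stdGaussianPDF]
  norm_num

lemma hasDerivAt_stdGaussianCDF_mul (α x : ℝ) :
    HasDerivAt (fun y => stdGaussianCDF (α * y)) (α * stdGaussianPDF (α * x)) x :=
  ((hasDerivAt_stdGaussianCDF (α * x)).comp x ((hasDerivAt_id x).const_mul α)).congr_deriv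
    (by ring)

lemma integral_mul_skewNormalPDF (α : ℝ) :
    ∫ x, x * skewNormalPDF α x = 2 * α / √(2 * π * (1 + α ^ 2)) := by
  have h_parts := integral_mul_deriv_eq_deriv_mul_of_integrable
    (u := fun x => stdGaussianCDF (α * x)) (u' := fun x => α * stdGaussianPDF (α * x))
    (v := fun x => -stdGaussianPDF x) (v' := fun x => x * stdGaussianPDF x)
    (fun x _ => hasDerivAt_stdGaussianCDF_mul α x)
    (fun x _ => by simpa using (hasDerivAt_stdGaussianPDF x).fun_neg)
    ((integrable_mul_stdGaussianCDF_mul (integrable_pow_mul_stdGaussianPDF 1) α).congr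
      (.of_forall fun x => by simp only [Pi.mul_apply]; ring))
    (((integrable_stdGaussianPDF_mul_stdGaussianPDF_mul α).const_mul (-α)).congr
      (.of_forall fun x => by simp only [Pi.mul_apply]; ring))
    ((integrable_mul_stdGaussianCDF_mul integrable_stdGaussianPDF.neg α).congr
      (.of_forall fun x => by simp only [Pi.mul_apply, Pi.neg_apply]; ring))
  calc ∫ x, x * skewNormalPDF α x
      = 2 * ∫ x, stdGaussianCDF (α * x) * (x * stdGaussianPDF x) := by
        rw [← integral_const_mul]; congr with x; rw [skewNormalPDF]; ring
    _ = 2 * (α * ∫ x, stdGaussianPDF x * stdGaussianPDF (α * x)) := by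
        rw [h_parts, ← integral_const_mul, ← integral_neg]; congr with x; ring
    _ = 2 * α / √(2 * π * (1 + α ^ 2)) := by
        rw [integral_stdGaussianPDF_mul_stdGaussianPDF_mul]; ring

lemma integral_eq_mul_integral_comp_add_mul (f : ℝ → ℝ) (μ : ℝ) {σ : ℝ} (hσ : 0 < σ) :
    ∫ x, f x = σ * ∫ u, f (μ + σ * u) := by
  rw [Measure.integral_comp_mul_left (fun y => f (μ + y)), integral_add_left_eq_self,
    smul_eq_mul, abs_inv, abs_of_pos hσ, mul_inv_cancel_left₀ hσ.ne']

lemma integral_add_mul_sq_mul {g : ℝ → ℝ} (a b : ℝ) (h₀ : Integrable g)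
    (h₁ : Integrable fun x => x * g x) (h₂ : Integrable fun x => x ^ 2 * g x) :
    ∫ x, (a + b * x) ^ 2 * g x
      = a ^ 2 * (∫ x, g x) + 2 * a * b * (∫ x, x * g x) + b ^ 2 * ∫ x, x ^ 2 * g x := by
  have h_expand : (fun x => (a + b * x) ^ 2 * g x)
      = fun x => a ^ 2 * g x + 2 * a * b * (x * g x) + b ^ 2 * (x ^ 2 * g x) := by
    ext x; ring
  rw [h_expand, integral_add ?_ (h₂.const_mul _), integral_add (h₀.const_mul _) (h₁.const_mul _),
    integral_const_mul, integral_const_mul, integral_const_mul]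
  exact (h₀.const_mul _).add (h₁.const_mul _)

lemma normalPDF_add_mul (μ : ℝ) {σ : ℝ} (hσ : σ ≠ 0) (u : ℝ) :
    normalPDF μ σ (μ + σ * u) = σ⁻¹ * stdGaussianPDF u := by
  rw [normalPDF, stdGaussianPDF, add_sub_cancel_left, mul_inv, mul_pow, mul_assoc]
  congr 3
  field_simp

theorem winner_density_second_moment_general (μ σ ρ : ℝ) (hσ : 0 < σ) :
    ∫ x, x ^ 2 * (2 * normalPDF μ σ x
        * stdGaussianCDF ((x - μ) / Real.sqrt (σ ^ 2 + ρ ^ 2)))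
      = μ ^ 2 + 4 * μ * σ ^ 2 / Real.sqrt (2 * Real.pi * (2 * σ ^ 2 + ρ ^ 2))
        + σ ^ 2 := by
  set s := √(σ ^ 2 + ρ ^ 2)
  have hs : 0 < s := sqrt_pos.2 (by positivity)
  set α := σ / s with hα
  have h_std (u : ℝ) : 2 * normalPDF μ σ (μ + σ * u) * stdGaussianCDF ((μ + σ * u - μ) / s)
      = σ⁻¹ * skewNormalPDF α u := by
    rw [normalPDF_add_mul μ hσ.ne', skewNormalPDF, add_sub_cancel_left, mul_div_right_comm]
    ring
  have h_shape : α / √(2 * π * (1 + α ^ 2)) = σ / √(2 * π * (2 * σ ^ 2 + ρ ^ 2)) := by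
    rw [hα]
    have h_var : 2 * π * (1 + (σ / s) ^ 2) = 2 * π * (2 * σ ^ 2 + ρ ^ 2) / s ^ 2 := by
      field_simp; rw [sq_sqrt (by positivity)]; ring
    rw [h_var, sqrt_div' _ (sq_nonneg s), sqrt_sq hs.le]
    field_simp
  calc _ = σ * ∫ u, (μ + σ * u) ^ 2 * (σ⁻¹ * skewNormalPDF α u) := by
        rw [integral_eq_mul_integral_comp_add_mul _ μ hσ]; simp_rw [h_std]
    _ = ∫ u, (μ + σ * u) ^ 2 * skewNormalPDF α u := by
        rw [← integral_const_mul]; congr with u; field_simp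
    _ = μ ^ 2 * 1 + 2 * μ * σ * (2 * α / √(2 * π * (1 + α ^ 2))) + σ ^ 2 * 1 := by
        rw [integral_add_mul_sq_mul μ σ (by simpa using integrable_pow_mul_skewNormalPDF α 0)
          (by simpa using integrable_pow_mul_skewNormalPDF α 1)
          (integrable_pow_mul_skewNormalPDF α 2), integral_skewNormalPDF,
          integral_mul_skewNormalPDF, integral_sq_mul_skewNormalPDF]
    _ = _ := by rw [mul_div_assoc, h_shape]; ring

/-- The second moment of the density `q(x) = 2 φ_{μ,σ²}(x) Φ((x-μ)/√(σ²+ρ²))` is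
`μ² + 4μσ²/√(2π(2σ²+ρ²)) + σ²`. -/
theorem winner_density_second_moment (μ σ ρ : ℝ) (hσ : 0 < σ) (hρ : 0 < ρ) :
    ∫ x, x ^ 2 * (2 * normalPDF μ σ x
        * stdGaussianCDF ((x - μ) / Real.sqrt (σ ^ 2 + ρ ^ 2)))
      = μ ^ 2 + 4 * μ * σ ^ 2 / Real.sqrt (2 * Real.pi * (2 * σ ^ 2 + ρ ^ 2))
        + σ ^ 2 :=
  winner_density_second_moment_general μ σ ρ hσ
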